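/- Suppose c : ℕ → ℕ → ℤ (indexed by n ≥ d ≥ 1) satisfies, for each n, w_n(x,t) := Σ_{n≥d≥l≥1} (−1)^{d−l} c_l(n,d) x^{n−d} (t choose l), where c_l is the l-fold multinomial convolution of c = c₁, and suppose Σ_{d=1}^{n}(−1)^{d-1}c(n,d)=1 for all n. Then in ℚ[[x,y]][t], 1 + Σ_{n≥1} w_n(x,t) y^n/n! = (1 − F₁(−x,−y))^t, where F₁(x,y) = Σ_{n≥d≥1} c(n,d) x^{n−d} y^n/n! and (1−G)^t := Σ_{l≥0} (t choose l)(−G)^l. -/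

import Mathlib

open Finset

/-- The `l`-fold multinomial convolution
`c_l(n,d) = Σ_{n₁+⋯+n_l=n, d₁+⋯+d_l=d, nᵢ≥dᵢ≥1} (n!/(n₁!⋯n_l!)) ∏ c(nᵢ,dᵢ)`. -/
def conv (c : ℕ → ℕ → ℤ) (l n d : ℕ) : ℤ :=
  ∑ ν : Fin l → Fin (n + 1), ∑ δ : Fin l → Fin (n + 1),
    if (∑ i, (ν i : ℕ)) = n ∧ (∑ i, (δ i : ℕ)) = d ∧
        (∀ i, 1 ≤ (δ i : ℕ) ∧ (δ i : ℕ) ≤ (ν i : ℕ)) then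
      (Nat.multinomial Finset.univ (fun i => (ν i : ℕ)) : ℤ) * ∏ i, c (ν i) (δ i)
    else 0

/-- The polynomial binomial coefficient `(t choose l) = t(t−1)⋯(t−l+1)/l!`. -/
noncomputable def choosePoly (l : ℕ) : Polynomial ℚ :=
  Polynomial.C ((1 : ℚ) / Nat.factorial l) *
    ∏ i ∈ range l, (Polynomial.X - Polynomial.C (i : ℚ))

/-- `F₁(x,y) = Σ_{n ≥ d ≥ 1} c(n,d) x^{n−d} y^n/n!` (first variable `x`,
second variable `y`). -/
noncomputable def F₁ (c : ℕ → ℕ → ℤ) : MvPowerSeries (Fin 2) ℚ :=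
  fun m => if m 0 + 1 ≤ m 1 then
      (conv c 1 (m 1) (m 1 - m 0) : ℚ) / Nat.factorial (m 1)
    else 0

/-- The substitution `(x, y) ↦ (−x, −y)` on a bivariate power series. -/
noncomputable def negSubst (F : MvPowerSeries (Fin 2) ℚ) : MvPowerSeries (Fin 2) ℚ :=
  fun m => (-1 : ℚ) ^ (m 0 + m 1) * MvPowerSeries.coeff m F

/-- `(1 − G)^t := Σ_{l ≥ 0} (t choose l)(−G)^l`, a power series with polynomial
coefficients in `t`; the inner sum is finite in each coefficient since `G` has
zero constant term. -/
noncomputable def onePowT (G : MvPowerSeries (Fin 2) ℚ) :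
    MvPowerSeries (Fin 2) (Polynomial ℚ) :=
  fun m => ∑ l ∈ range (m 0 + m 1 + 1),
    Polynomial.C (MvPowerSeries.coeff m ((-G) ^ l)) * choosePoly l

/-- The generating function `1 + Σ_{n ≥ 1} w_n(x,t) y^n/n!`, where
`w_n(x,t) = Σ_{n ≥ d ≥ l ≥ 1} (−1)^{d−l} c_l(n,d) x^{n−d} (t choose l)`. -/
noncomputable def whitneyEGF (c : ℕ → ℕ → ℤ) :
    MvPowerSeries (Fin 2) (Polynomial ℚ) :=
  fun m =>
    if m 1 = 0 then (if m 0 = 0 then 1 else 0)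
    else
      Polynomial.C ((1 : ℚ) / Nat.factorial (m 1)) *
        ∑ l ∈ Icc 1 (m 1 - m 0),
          Polynomial.C ((-1 : ℚ) ^ ((m 1 - m 0) - l) * (conv c l (m 1) (m 1 - m 0) : ℚ)) *
            choosePoly l

lemma conv_eq_zero_of_lt (c : ℕ → ℕ → ℤ) {l n d : ℕ} (h : d < l) : conv c l n d = 0 := by
  unfold conv
  refine Finset.sum_eq_zero fun ν _ => Finset.sum_eq_zero fun δ _ => ?_
  rw [if_neg]
  rintro ⟨-, hd, hδ⟩
  have h1 : ∀ i ∈ (univ : Finset (Fin l)), 1 ≤ (δ i : ℕ) := fun i _ => (hδ i).1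
  have := Finset.card_nsmul_le_sum univ (fun i => (δ i : ℕ)) 1 h1
  simp only [Finset.card_univ, Fintype.card_fin, smul_eq_mul, mul_one] at this
  omega

lemma conv_one_eq (c : ℕ → ℕ → ℤ) {n d : ℕ} (h1 : 1 ≤ d) (h2 : d ≤ n) :
    conv c 1 n d = c n d := by
  unfold conv
  have hd : d < n + 1 := by omega
  have hn : n < n + 1 := by omega
  rw [Finset.sum_eq_single (fun _ : Fin 1 => (⟨n, hn⟩ : Fin (n + 1)))]
  · rw [Finset.sum_eq_single (fun _ : Fin 1 => (⟨d, hd⟩ : Fin (n + 1)))]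
    · rw [if_pos]
      · have : (univ : Finset (Fin 1)) = {0} := rfl
        simp [this, Nat.multinomial_singleton]
      · refine ⟨by simp, by simp, fun i => ⟨h1, h2⟩⟩
    · intro δ _ hδ
      rw [if_neg]
      rintro ⟨-, hd', -⟩
      apply hδ
      funext i
      have : i = 0 := Subsingleton.elim i 0
      subst this
      simp only [Fin.sum_univ_one] at hd'
      exact Fin.ext hd'
    · simp
  · intro ν _ hν
    refine Finset.sum_eq_zero fun δ _ => ?_
    rw [if_neg]
    rintro ⟨hn', -, -⟩
    apply hν
    funext i
    have : i = 0 := Subsingleton.elim i 0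
    subst this
    simp only [Fin.sum_univ_one] at hn'
    exact Fin.ext hn'
  · simp

lemma coeff_negG (c : ℕ → ℕ → ℤ) (p : Fin 2 →₀ ℕ) :
    MvPowerSeries.coeff p (-negSubst (F₁ c)) =
      if p 0 + 1 ≤ p 1 then
        (-1 : ℚ) ^ (p 0 + p 1 + 1) * (c (p 1) (p 1 - p 0) : ℚ) / (p 1).factorial
      else 0 := by
  rw [map_neg, MvPowerSeries.coeff_apply]
  show -((-1 : ℚ) ^ (p 0 + p 1) * MvPowerSeries.coeff p (F₁ c)) = _
  rw [MvPowerSeries.coeff_apply]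
  show -((-1 : ℚ) ^ (p 0 + p 1) *
    (if p 0 + 1 ≤ p 1 then (conv c 1 (p 1) (p 1 - p 0) : ℚ) / (p 1).factorial else 0)) = _
  split_ifs with h
  · rw [conv_one_eq c (by omega) (by omega)]
    ring
  · simp

lemma coeff_negG_pow (c : ℕ → ℕ → ℤ) {l : ℕ} (hl : 1 ≤ l) (m : Fin 2 →₀ ℕ) :
    MvPowerSeries.coeff m ((-negSubst (F₁ c)) ^ l) =
      (-1 : ℚ) ^ (m 0 + m 1 + l) * (conv c l (m 1) (m 1 - m 0) : ℚ) / (m 1).factorial := by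
  classical
  rw [MvPowerSeries.coeff_pow]
  simp only [coeff_negG]
  simp only [Finset.prod_ite_zero]
  rw [← Finset.sum_filter]
  have hconv :
      (-1 : ℚ) ^ (m 0 + m 1 + l) * (conv c l (m 1) (m 1 - m 0) : ℚ) / (m 1).factorial =
      ∑ p ∈ ((univ ×ˢ univ : Finset ((Fin l → Fin (m 1 + 1)) × (Fin l → Fin (m 1 + 1)))).filter
          (fun p => (∑ i, (p.1 i : ℕ)) = m 1 ∧ (∑ i, (p.2 i : ℕ)) = m 1 - m 0 ∧
            ∀ i, 1 ≤ (p.2 i : ℕ) ∧ (p.2 i : ℕ) ≤ (p.1 i : ℕ))),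
        (-1 : ℚ) ^ (m 0 + m 1 + l) *
          ((Nat.multinomial univ (fun i => (p.1 i : ℕ)) : ℚ) * ∏ i, (c (p.1 i) (p.2 i) : ℚ)) /
          (m 1).factorial := by
    rw [Finset.sum_filter, Finset.sum_product]
    unfold conv
    push_cast [apply_ite (fun x : ℤ => (x : ℚ))]
    rw [Finset.mul_sum, Finset.sum_div]
    refine Finset.sum_congr rfl fun ν _ => ?_
    rw [Finset.mul_sum, Finset.sum_div]
    refine Finset.sum_congr rfl fun δ _ => ?_
    split_ifs with h
    · ring
    · simp
  rw [hconv]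
  have hbound : ∀ k ∈ (finsuppAntidiag (range l) m).filter
      (fun k => ∀ i ∈ range l, (k i) 0 + 1 ≤ (k i) 1),
      (∑ i ∈ range l, (k i) 1 = m 1) ∧ (∑ i ∈ range l, (k i) 0 = m 0) ∧
        (∀ i < l, (k i) 0 + 1 ≤ (k i) 1) ∧ (∀ i, l ≤ i → k i = 0) := by
    intro k hk
    obtain ⟨hmem, hP⟩ := Finset.mem_filter.1 hk
    obtain ⟨hsum, hsupp⟩ := Finset.mem_finsuppAntidiag.1 hmem
    refine ⟨by rw [← hsum, Finset.sum_apply'], by rw [← hsum, Finset.sum_apply'],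
      fun i hi => hP i (Finset.mem_range.2 hi), fun i hi => ?_⟩
    by_contra hne
    exact absurd (Finset.mem_range.1 (hsupp (Finsupp.mem_support_iff.2 hne))) (by omega)
  refine Finset.sum_bij'
    (fun k hk => (fun idx : Fin l =>
        (⟨k idx 1, by
          have h1 := (hbound k hk).1
          have h2 : k idx.val 1 ≤ ∑ i ∈ range l, k i 1 :=
            Finset.single_le_sum (f := fun i => k i 1) (fun i _ => Nat.zero_le _) (Finset.mem_range.2 idx.isLt)
          omega⟩ : Fin (m 1 + 1)),
      fun idx : Fin l =>
        (⟨k idx 1 - k idx 0, by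
          have h1 := (hbound k hk).1
          have h2 : k idx.val 1 ≤ ∑ i ∈ range l, k i 1 :=
            Finset.single_le_sum (f := fun i => k i 1) (fun i _ => Nat.zero_le _) (Finset.mem_range.2 idx.isLt)
          omega⟩ : Fin (m 1 + 1))))
    (fun p _ => Finsupp.onFinset (range l)
        (fun i => if h : i < l then
            Finsupp.equivFunOnFinite.symm
              ![(p.1 ⟨i, h⟩ : ℕ) - (p.2 ⟨i, h⟩ : ℕ), (p.1 ⟨i, h⟩ : ℕ)]
          else 0)
        (fun i hi => by
          rw [Finset.mem_range]; by_contra hc; exact hi (by simp only [dif_neg hc])))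
    ?_ ?_ ?_ ?_ ?_
  · -- hi : forward map lands in the pair-side filter
    intro k hk
    have hb := hbound k hk
    rw [Finset.mem_filter]
    refine ⟨by simp [Finset.mem_product], ?_, ?_, ?_⟩
    · simp only [Fin.val_mk]
      rw [← Finset.sum_range (fun i => k i 1), hb.1]
    · simp only [Fin.val_mk]
      rw [← Finset.sum_range (fun i => k i 1 - k i 0),
        Finset.sum_tsub_distrib _ (fun x hx => by
          have := hb.2.2.1 x (Finset.mem_range.1 hx); omega),
        hb.1, hb.2.1]
    · intro idx
      have := hb.2.2.1 idx.val idx.isLt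
      simp only [Fin.val_mk]
      omega
  · -- hj : backward map lands in the k-side filter
    intro p hp
    rw [Finset.mem_filter] at hp
    obtain ⟨-, h1, h2, h3⟩ := hp
    have hll : (l : ℕ) ≤ ∑ i, (p.2 i : ℕ) := by
      have := Finset.card_nsmul_le_sum (univ : Finset (Fin l))
        (fun i => (p.2 i : ℕ)) 1 (fun i _ => (h3 i).1)
      simpa using this
    have ha : m 0 < m 1 := by omega
    rw [Finset.mem_filter]
    refine ⟨Finset.mem_finsuppAntidiag.2 ⟨?_, Finsupp.support_onFinset_subset⟩, ?_⟩
    · ext x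
      rw [Finset.sum_apply', Finset.sum_range]
      have heval : ∀ (idx : Fin l) (x : Fin 2),
          (Finsupp.onFinset (range l)
            (fun i => if h : i < l then
                Finsupp.equivFunOnFinite.symm
                  ![(p.1 ⟨i, h⟩ : ℕ) - (p.2 ⟨i, h⟩ : ℕ), (p.1 ⟨i, h⟩ : ℕ)]
              else 0)
            (fun i hi => by
              rw [Finset.mem_range]; by_contra hc; exact hi (by simp only [dif_neg hc]))
            : ℕ →₀ (Fin 2 →₀ ℕ)) idx.val x
            = ![(p.1 idx : ℕ) - (p.2 idx : ℕ), (p.1 idx : ℕ)] x := by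
        intro idx x
        rw [Finsupp.onFinset_apply, dif_pos idx.isLt]
        simp [Fin.eta]
      simp only [heval]
      fin_cases x
      · show (∑ idx : Fin l, ((p.1 idx : ℕ) - (p.2 idx : ℕ))) = m 0
        rw [Finset.sum_tsub_distrib _ (fun x _ => (h3 x).2), h1, h2]
        omega
      · show (∑ idx : Fin l, (p.1 idx : ℕ)) = m 1
        exact h1
    · intro i hi
      have hil := Finset.mem_range.1 hi
      rw [Finsupp.onFinset_apply, dif_pos hil]
      have h3i := h3 ⟨i, hil⟩
      simp only [Finsupp.coe_equivFunOnFinite_symm, Matrix.cons_val_zero,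
        Matrix.cons_val_one, Matrix.head_cons]
      omega
  · -- left inverse
    intro k hk
    have hb := hbound k hk
    ext x j'
    rw [Finsupp.onFinset_apply]
    by_cases hx : x < l
    · rw [dif_pos hx]
      have hkx := hb.2.2.1 x hx
      simp only [Finsupp.coe_equivFunOnFinite_symm, Fin.val_mk]
      match j' with
      | 0 => show k x 1 - (k x 1 - k x 0) = k x 0; omega
      | 1 => rfl
    · rw [dif_neg hx]
      rw [hb.2.2.2 x (by omega)]
  · -- right inverse
    intro p hp
    rw [Finset.mem_filter] at hp
    obtain ⟨-, h1, h2, h3⟩ := hp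
    refine Prod.ext (funext fun idx => Fin.ext ?_) (funext fun idx => Fin.ext ?_)
    · show (Finsupp.onFinset (range l) _ _ : ℕ →₀ (Fin 2 →₀ ℕ)) idx.val 1 = (p.1 idx : ℕ)
      rw [Finsupp.onFinset_apply, dif_pos idx.isLt]
      simp [Fin.eta]
    · show (Finsupp.onFinset (range l) _ _ : ℕ →₀ (Fin 2 →₀ ℕ)) idx.val 1
          - (Finsupp.onFinset (range l) _ _ : ℕ →₀ (Fin 2 →₀ ℕ)) idx.val 0 = (p.2 idx : ℕ)
      rw [Finsupp.onFinset_apply, dif_pos idx.isLt]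
      have h3i := h3 idx
      simp only [Finsupp.coe_equivFunOnFinite_symm, Matrix.cons_val_zero,
        Matrix.cons_val_one, Matrix.head_cons, Fin.eta]
      omega
  · -- value equality
    intro k hk
    have hb := hbound k hk
    simp only [Fin.val_mk]
    rw [Finset.prod_div_distrib, Finset.prod_mul_distrib, Finset.prod_pow_eq_pow_sum]
    have hexp : ∑ i ∈ range l, (k i 0 + k i 1 + 1) = m 0 + m 1 + l := by
      rw [Finset.sum_add_distrib, Finset.sum_add_distrib, Finset.sum_const, hb.1, hb.2.1,
        Finset.card_range, smul_eq_mul, mul_one]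
    rw [hexp]
    have hprodc : (∏ i ∈ range l, (c (k i 1) (k i 1 - k i 0) : ℚ))
        = ∏ idx : Fin l, (c (k idx.val 1) (k idx.val 1 - k idx.val 0) : ℚ) :=
      Finset.prod_range _
    have hprodf : (∏ i ∈ range l, ((k i 1).factorial : ℚ))
        = ∏ idx : Fin l, ((k idx.val 1).factorial : ℚ) :=
      Finset.prod_range _
    have hspec := Nat.multinomial_spec (univ : Finset (Fin l)) (fun idx => k idx.val 1)
    have hsum1 : (∑ idx : Fin l, k idx.val 1) = m 1 := by
      rw [← Finset.sum_range (fun i => k i 1), hb.1]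
    rw [hsum1] at hspec
    have hspecQ : (∏ idx : Fin l, ((k idx.val 1).factorial : ℚ)) *
        (Nat.multinomial (univ : Finset (Fin l)) (fun idx => k idx.val 1) : ℚ)
        = ((m 1).factorial : ℚ) := by
      rw [← Nat.cast_prod, ← Nat.cast_mul, hspec]
    have hne1 : ((m 1).factorial : ℚ) ≠ 0 := Nat.cast_ne_zero.2 (Nat.factorial_ne_zero _)
    have hne2 : (∏ idx : Fin l, ((k idx.val 1).factorial : ℚ)) ≠ 0 := by
      rw [← hspecQ] at hne1
      exact fun h0 => hne1 (by rw [h0, zero_mul])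
    rw [hprodc, hprodf]
    field_simp
    rw [← hspecQ]
    ring

/-- if `Σ_{d=1}^{n} (−1)^{d−1} c(n,d) = 1` for all `n ≥ 1`, then
`1 + Σ_{n≥1} w_n(x,t) y^n/n! = (1 − F₁(−x,−y))^t` in `ℚ[t][[x,y]]`. -/
theorem statement9 (c : ℕ → ℕ → ℤ)
    (hc : ∀ n, 1 ≤ n → ∑ d ∈ Icc 1 n, (-1 : ℤ) ^ (d - 1) * c n d = 1) :
    whitneyEGF c = onePowT (negSubst (F₁ c)) := by
  funext m
  show (whitneyEGF c) m = (onePowT (negSubst (F₁ c))) m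
  unfold whitneyEGF onePowT
  by_cases hn : m 1 = 0
  · rw [if_pos hn]
    rw [Finset.sum_eq_single 0]
    · rw [pow_zero, MvPowerSeries.coeff_one]
      have hcp : choosePoly 0 = 1 := by simp [choosePoly]
      rw [hcp, mul_one]
      by_cases ha : m 0 = 0
      · have hm0 : m = 0 := by
          ext i
          match i with
          | 0 => exact ha
          | 1 => exact hn
        rw [if_pos ha, if_pos hm0]
        simp
      · rw [if_neg ha, if_neg (fun h0 => ha (by rw [h0]; rfl)), map_zero]
    · intro l _ hl0
      rw [coeff_negG_pow c (Nat.one_le_iff_ne_zero.2 hl0) m,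
        conv_eq_zero_of_lt c (show m 1 - m 0 < l by omega)]
      simp
    · simp
  · rw [if_neg hn]
    have hsub : Icc 1 (m 1 - m 0) ⊆ range (m 0 + m 1 + 1) := by
      intro x hx
      rw [Finset.mem_Icc] at hx
      rw [Finset.mem_range]
      omega
    rw [← Finset.sum_subset hsub ?_]
    · rw [Finset.mul_sum]
      refine Finset.sum_congr rfl fun l hl => ?_
      rw [Finset.mem_Icc] at hl
      rw [coeff_negG_pow c hl.1 m, ← mul_assoc, ← map_mul]
      congr 2
      have hsign : (-1 : ℚ) ^ (m 0 + m 1 + l) = (-1) ^ (m 1 - m 0 - l) := by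
        rw [show m 0 + m 1 + l = (m 1 - m 0 - l) + 2 * (m 0 + l) by omega, pow_add, pow_mul]
        norm_num
      rw [hsign]
      ring
    · intro x hx hxn
      rw [Finset.mem_Icc] at hxn
      rcases Nat.eq_zero_or_pos x with rfl | hx1
      · rw [pow_zero, MvPowerSeries.coeff_one,
          if_neg (fun h0 => hn (by rw [h0]; rfl)), map_zero, zero_mul]
      · rw [coeff_negG_pow c hx1 m,
          conv_eq_zero_of_lt c (show m 1 - m 0 < x by omega)]
        simp
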